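/- Let G = S∞ × S∞ × S∞ be the product of three copies of the finitary symmetric group of ℕ and let K[α] and Θ_j[β] be as defined. For all p, q ∈ G and all α, β, γ ∈ ℕ: (1) there exists N such that for every j ≥ N there are k₁ ∈ K[α], k₂ ∈ K[γ] with p·Θ_j[β]·q = k₁·(p·Θ_N[β]·q)·k₂ (the double cosets K[α]·(p·Θ_j[β]·q)·K[γ] are eventually constant); (2) for all k₁ ∈ K[α], h, h' ∈ K[β], k₂ ∈ K[γ] there exists N such that for every j ≥ N the elements (k₁·p·h)·Θ_j[β]·(h'·q·k₂) and p·Θ_j[β]·q lie in the same (K[α], K[γ])-double coset; hence the eventual double coset depends only on the double cosets of p and q. -/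

import Mathlib

/-!
Elements of `K[n]` commute with every element of `G` supported in `[0, n)`, and the whole
argument consists of pushing elements of `K[n]` past `p` and `q` once `n` exceeds their supports.

For stabilization, `Θ_{s+m}[β] = a Θ_s[β] b` with `a = Θ_m[β+s]` and `b` both in `K[β+s]` when
`s ≤ m`, so `p Θ_{s+m}[β] q` and `p Θ_s[β] q` share a double coset for large `s`; comparing both
`Θ_j[β]` and `Θ_N[β]` with `Θ_{2j}[β]` gives the claim. For independence of representatives,
conjugating `h, h' ∈ K[β]` by the involution `Θ = Θ_j[β]` lands in `K[β+j]` once `j` is large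
(`Θ` moves `[β, β+j)` out of `[0, β+j)`), and then
`p h Θ h' q = (Θ h' Θ) (p Θ q) (Θ h Θ)`.
-/
open scoped InnerProductSpace

/-- The finitary symmetric group of a countable set: permutations with finite support. -/
def finitarySymm (Ω : Type*) : Subgroup (Equiv.Perm Ω) where
  carrier := {g | {x | g x ≠ x}.Finite}
  one_mem' := by simp
  mul_mem' := by
    intro a b ha hb
    refine Set.Finite.subset (ha.union hb) fun x hx => ?_
    simp only [Set.mem_setOf_eq, Equiv.Perm.mul_apply] at hx
    simp only [Set.mem_union, Set.mem_setOf_eq]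
    by_cases h : b x = x
    · exact Or.inl (by simpa [h] using hx)
    · exact Or.inr h
  inv_mem' := by
    intro a ha
    refine Set.Finite.subset ha fun x hx => ?_
    simp only [Set.mem_setOf_eq] at hx ⊢
    intro h
    apply hx
    nth_rewrite 1 [← h]
    exact Equiv.symm_apply_apply a x

/-- `S∞`, the finitary symmetric group of `ℕ`. -/
abbrev SInf := ↥(finitarySymm ℕ)

/-- The group `G = S∞ × S∞ × S∞`. -/
abbrev TriG := SInf × SInf × SInf

/-- Membership in the subgroup `K[α] ⊆ G`: diagonal triples `(r, r, r)` with `r ∈ S∞`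
fixing every `x < α`. -/
def InKtri (α : ℕ) (k : TriG) : Prop :=
  ∃ r : SInf, (∀ x < α, (r : Equiv.Perm ℕ) x = x) ∧ k = (r, r, r)

/-- The permutation exchanging the blocks `[β, β+j)` and `[β+j, β+2j)`. -/
def thetaFun (β j : ℕ) (x : ℕ) : ℕ :=
  if β ≤ x ∧ x < β + j then x + j
  else if β + j ≤ x ∧ x < β + 2 * j then x - j
  else x

lemma thetaFun_involutive (β j : ℕ) : Function.Involutive (thetaFun β j) := by
  intro x
  unfold thetaFun
  split_ifs <;> omega

/-- `θ_j[β]` as a permutation of `ℕ`. -/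
def thetaPerm (β j : ℕ) : Equiv.Perm ℕ :=
  Function.Involutive.toPerm _ (thetaFun_involutive β j)

lemma thetaPerm_finitary (β j : ℕ) : thetaPerm β j ∈ finitarySymm ℕ := by
  refine Set.Finite.subset (Set.finite_Iio (β + 2 * j)) fun x hx => ?_
  simp only [Set.mem_setOf_eq, thetaPerm, Function.Involutive.coe_toPerm, thetaFun] at hx
  simp only [Set.mem_Iio]
  by_contra h
  apply hx
  split_ifs <;> omega

/-- `θ_j[β]` as an element of `S∞`. -/
def thetaEl (β j : ℕ) : SInf := ⟨thetaPerm β j, thetaPerm_finitary β j⟩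

/-- `Θ_j[β] = (θ_j[β], θ_j[β], θ_j[β])` as an element of `G = S∞ × S∞ × S∞`. -/
def ThetaTri (β j : ℕ) : TriG := (thetaEl β j, thetaEl β j, thetaEl β j)

/-- Two elements of `G` lie in the same `(K[α], K[γ])`-double coset. -/
def SameDC (α γ : ℕ) (u v : TriG) : Prop :=
  ∃ k₁ k₂ : TriG, InKtri α k₁ ∧ InKtri γ k₂ ∧ u = k₁ * v * k₂

open Set Filter

section FixingSubgroup

variable {G α : Type*} [Group G] [MulAction G α]

theorem smul_mem_of_mem_fixingSubgroup_compl {s : Set α} {b : G} (hb : b ∈ fixingSubgroup G sᶜ)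
    {x : α} (hx : x ∈ s) : b • x ∈ s := by
  by_contra hbx
  have hfix : b • b • x = b • x := (mem_fixingSubgroup_iff G).1 hb _ hbx
  exact hbx (by rwa [(smul_left_cancel_iff b).1 hfix])

theorem commute_of_mem_fixingSubgroup_of_mem_fixingSubgroup_compl [FaithfulSMul G α]
    {s : Set α} {a b : G} (ha : a ∈ fixingSubgroup G s) (hb : b ∈ fixingSubgroup G sᶜ) :
    Commute a b := by
  refine eq_of_smul_eq_smul (α := α) fun x => ?_
  rw [mul_smul, mul_smul]
  by_cases hx : x ∈ s
  · rw [(mem_fixingSubgroup_iff G).1 ha _ (smul_mem_of_mem_fixingSubgroup_compl hb hx),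
      (mem_fixingSubgroup_iff G).1 ha _ hx]
  · rw [← compl_compl s] at ha
    rw [(mem_fixingSubgroup_iff G).1 hb _ hx,
      (mem_fixingSubgroup_iff G).1 hb _ (smul_mem_of_mem_fixingSubgroup_compl ha hx)]

end FixingSubgroup

section Theta

variable {β j : ℕ}

theorem thetaEl_smul (β j x : ℕ) : thetaEl β j • x = thetaFun β j x := rfl

theorem thetaFun_of_lt {x : ℕ} (hx : x < β) : thetaFun β j x = x := by
  unfold thetaFun; split_ifs <;> omega

theorem thetaFun_eq_add {x : ℕ} (h₁ : β ≤ x) (h₂ : x < β + j) :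
    thetaFun β j x = x + j := by
  unfold thetaFun; split_ifs <;> omega

theorem thetaFun_eq_sub {x : ℕ} (h₁ : β + j ≤ x) (h₂ : x < β + 2 * j) :
    thetaFun β j x = x - j := by
  unfold thetaFun; split_ifs <;> omega

theorem thetaEl_mul_self (β j : ℕ) : thetaEl β j * thetaEl β j = 1 :=
  Subtype.ext (Equiv.ext (thetaFun_involutive β j))

theorem thetaEl_inv (β j : ℕ) : (thetaEl β j)⁻¹ = thetaEl β j :=
  inv_eq_of_mul_eq_one_right (thetaEl_mul_self β j)

theorem thetaEl_mem_fixingSubgroup (β j : ℕ) : thetaEl β j ∈ fixingSubgroup SInf (Iio β) :=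
  (mem_fixingSubgroup_iff _).2 fun _ hx => thetaFun_of_lt hx

theorem thetaEl_mul_mul_thetaEl_mem_fixingSubgroup {r : SInf}
    (hr : r ∈ fixingSubgroup SInf (Iio β)) (hr' : r ∈ fixingSubgroup SInf (Ici (β + j))) :
    thetaEl β j * r * thetaEl β j ∈ fixingSubgroup SInf (Iio (β + j)) := by
  refine (mem_fixingSubgroup_iff _).2 fun x (hx : x < β + j) => ?_
  simp only [mul_smul, thetaEl_smul]
  rcases lt_or_ge x β with h | h
  · rw [thetaFun_of_lt h, (mem_fixingSubgroup_iff _).1 hr x h, thetaFun_of_lt h]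
  · rw [thetaFun_eq_add h hx, (mem_fixingSubgroup_iff _).1 hr' _ (mem_Ici.2 (by omega)),
      thetaFun_eq_sub (by omega) (by omega)]
    omega

theorem exists_thetaEl_add_eq {s m : ℕ} (hsm : s ≤ m) :
    ∃ a ∈ fixingSubgroup SInf (Iio (β + s)), ∃ b ∈ fixingSubgroup SInf (Iio (β + s)),
      thetaEl β (s + m) = a * thetaEl β s * b := by
  refine ⟨thetaEl (β + s) m, thetaEl_mem_fixingSubgroup _ _,
    (thetaEl β s)⁻¹ * (thetaEl (β + s) m)⁻¹ * thetaEl β (s + m), ?_, by group⟩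
  refine (mem_fixingSubgroup_iff _).2 fun x (hx : x < β + s) => ?_
  simp only [thetaEl_inv, mul_smul, thetaEl_smul]
  rcases lt_or_ge x β with h | h
  · rw [thetaFun_of_lt h, thetaFun_of_lt hx, thetaFun_of_lt h]
  · -- `x ↦ x + (s + m) ↦ x + s ↦ x`
    rw [thetaFun_eq_add h (by omega : x < β + (s + m)),
      thetaFun_eq_sub (β := β + s) (by omega) (by omega),
      show x + (s + m) - m = x + s by omega, thetaFun_eq_sub (by omega) (by omega)]
    omega

end Theta

theorem eventually_mem_fixingSubgroup_Ici (r : SInf) :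
    ∀ᶠ n : ℕ in atTop, r ∈ fixingSubgroup SInf (Ici n) := by
  obtain ⟨b, hb⟩ := r.2.bddAbove
  refine eventually_atTop.2 ⟨b + 1, fun n hn => (mem_fixingSubgroup_iff _).2 fun x hx => ?_⟩
  by_contra hrx
  have : x ≤ b := hb hrx
  exact absurd (mem_Ici.1 hx) (by omega)

def diag3 : SInf →* TriG := (MonoidHom.id SInf).prod ((MonoidHom.id SInf).prod (MonoidHom.id SInf))

theorem diag3_apply (r : SInf) : diag3 r = (r, r, r) := rfl

def Ktri (α : ℕ) : Subgroup TriG := (fixingSubgroup SInf (Iio α)).map diag3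

def supportedBelow (n : ℕ) : Subgroup TriG :=
  (fixingSubgroup SInf (Ici n)).prod
    ((fixingSubgroup SInf (Ici n)).prod (fixingSubgroup SInf (Ici n)))

theorem mem_Ktri_iff {α : ℕ} {k : TriG} : k ∈ Ktri α ↔ InKtri α k := by
  simp [Ktri, InKtri, mem_fixingSubgroup_iff, diag3_apply, eq_comm]

theorem Ktri_antitone : Antitone Ktri := fun _ _ h =>
  Subgroup.map_mono (fixingSubgroup_antitone _ _ (Iio_subset_Iio h))

theorem eventually_mem_supportedBelow (g : TriG) : ∀ᶠ n in atTop, g ∈ supportedBelow n := by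
  filter_upwards [eventually_mem_fixingSubgroup_Ici g.1, eventually_mem_fixingSubgroup_Ici g.2.1,
    eventually_mem_fixingSubgroup_Ici g.2.2] with n h₁ h₂ h₃
  exact ⟨h₁, h₂, h₃⟩

theorem commute_of_mem_Ktri {n : ℕ} {k g : TriG} (hk : k ∈ Ktri n)
    (hg : g ∈ supportedBelow n) : Commute k g := by
  obtain ⟨r, hr, rfl⟩ := hk
  have hcomm : ∀ x ∈ fixingSubgroup SInf (Ici n), Commute r x := fun x hx =>
    commute_of_mem_fixingSubgroup_of_mem_fixingSubgroup_compl hr (by rwa [compl_Iio])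
  exact .prod (hcomm _ hg.1) (.prod (hcomm _ hg.2.1) (hcomm _ hg.2.2))

theorem thetaTri_eq_diag3 (β j : ℕ) : ThetaTri β j = diag3 (thetaEl β j) := rfl

theorem thetaTri_inv (β j : ℕ) : (ThetaTri β j)⁻¹ = ThetaTri β j := by
  rw [thetaTri_eq_diag3, ← map_inv, thetaEl_inv]

theorem thetaTri_mul_mul_thetaTri_mem_Ktri {β j : ℕ} {h : TriG} (hh : h ∈ Ktri β)
    (hh' : h ∈ supportedBelow (β + j)) : ThetaTri β j * h * ThetaTri β j ∈ Ktri (β + j) := by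
  obtain ⟨r, hr, rfl⟩ := hh
  exact ⟨_, thetaEl_mul_mul_thetaEl_mem_fixingSubgroup hr hh'.1, by simp [thetaTri_eq_diag3]⟩

theorem exists_thetaTri_add_eq {β s m : ℕ} (hsm : s ≤ m) :
    ∃ a ∈ Ktri (β + s), ∃ b ∈ Ktri (β + s), ThetaTri β (s + m) = a * ThetaTri β s * b := by
  obtain ⟨a, ha, b, hb, hab⟩ := exists_thetaEl_add_eq (β := β) hsm
  exact ⟨_, ⟨a, ha, rfl⟩, _, ⟨b, hb, rfl⟩, by simp [thetaTri_eq_diag3, hab]⟩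

theorem sameDC_iff {α γ : ℕ} {u v : TriG} :
    SameDC α γ u v ↔ DoubleCoset.setoid (Ktri α) (Ktri γ) v u := by
  rw [DoubleCoset.rel_iff]
  simp only [mem_Ktri_iff]
  exact ⟨fun ⟨a, b, ha, hb, e⟩ => ⟨a, ha, b, hb, e⟩, fun ⟨a, ha, b, hb, e⟩ => ⟨a, b, ha, hb, e⟩⟩

theorem sameDC_equivalence (α γ : ℕ) : Equivalence (SameDC α γ) := by
  have := (DoubleCoset.setoid (Ktri α : Set TriG) (Ktri γ)).iseqv
  exact ⟨fun u => sameDC_iff.2 (this.refl u), fun h => sameDC_iff.2 (this.symm (sameDC_iff.1 h)),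
    fun h₁ h₂ => sameDC_iff.2 (this.trans (sameDC_iff.1 h₂) (sameDC_iff.1 h₁))⟩

section GroupIdentities

variable {G : Type*} [Group G]

theorem mul_mul_mul_mul_eq_of_commute {p q t a b : G} (hp : Commute a p) (hq : Commute b q) :
    p * (a * t * b) * q = a * (p * t * q) * b := by
  calc p * (a * t * b) * q = (p * a) * t * (b * q) := by group
    _ = (a * p) * t * (q * b) := by rw [hp.eq, hq.eq]
    _ = a * (p * t * q) * b := by group

theorem mul_mul_mul_mul_eq_conj_mul_mul_conj {p q t h h' : G}
    (hh : Commute h (t * h' * t⁻¹)) (hp : Commute p (t * h' * t⁻¹))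
    (hq : Commute (t⁻¹ * h * t) q) :
    p * h * t * (h' * q) = (t * h' * t⁻¹) * (p * t * q) * (t⁻¹ * h * t) := by
  calc p * h * t * (h' * q) = p * (h * (t * h' * t⁻¹)) * t * q := by group
    _ = (p * (t * h' * t⁻¹)) * h * t * q := by rw [hh.eq]; group
    _ = (t * h' * t⁻¹) * p * t * ((t⁻¹ * h * t) * q) := by rw [hp.eq]; group
    _ = (t * h' * t⁻¹) * (p * t * q) * (t⁻¹ * h * t) := by rw [hq.eq]; group

end GroupIdentities

theorem sameDC_mul_thetaTri_add_mul {α β γ s m : ℕ} {p q : TriG}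
    (hp : p ∈ supportedBelow (β + s)) (hq : q ∈ supportedBelow (β + s))
    (hα : α ≤ β + s) (hγ : γ ≤ β + s) (hsm : s ≤ m) :
    SameDC α γ (p * ThetaTri β (s + m) * q) (p * ThetaTri β s * q) := by
  obtain ⟨a, ha, b, hb, hab⟩ := exists_thetaTri_add_eq (β := β) hsm
  refine ⟨a, b, mem_Ktri_iff.1 (Ktri_antitone hα ha), mem_Ktri_iff.1 (Ktri_antitone hγ hb), ?_⟩
  rw [hab, mul_mul_mul_mul_eq_of_commute (commute_of_mem_Ktri ha hp) (commute_of_mem_Ktri hb hq)]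

theorem exists_sameDC_mul_thetaTri_mul (p q : TriG) (α β γ : ℕ) :
    ∃ N, ∀ j ≥ N, SameDC α γ (p * ThetaTri β j * q) (p * ThetaTri β N * q) := by
  obtain ⟨N, hN⟩ := eventually_atTop.1 <| (eventually_mem_supportedBelow p).and <|
    (eventually_mem_supportedBelow q).and <| (eventually_ge_atTop α).and (eventually_ge_atTop γ)
  refine ⟨N, fun j hj => ?_⟩
  obtain ⟨hp, hq, hα, hγ⟩ := hN (β + j) (by omega)
  obtain ⟨hp', hq', hα', hγ'⟩ := hN (β + N) (by omega)
  have hjj : SameDC α γ (p * ThetaTri β (j + j) * q) (p * ThetaTri β j * q) :=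
    sameDC_mul_thetaTri_add_mul hp hq hα hγ le_rfl
  have hjN : SameDC α γ (p * ThetaTri β (j + j) * q) (p * ThetaTri β N * q) := by
    simpa only [show N + (j + j - N) = j + j by omega] using
      sameDC_mul_thetaTri_add_mul hp' hq' hα' hγ' (show N ≤ j + j - N by omega)
  exact (sameDC_equivalence α γ).trans ((sameDC_equivalence α γ).symm hjj) hjN

theorem eventually_sameDC_mul_mul_thetaTri_mul_mul {α β γ : ℕ} (p q : TriG) {k₁ h h' k₂ : TriG}
    (hk₁ : k₁ ∈ Ktri α) (hh : h ∈ Ktri β) (hh' : h' ∈ Ktri β) (hk₂ : k₂ ∈ Ktri γ) :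
    ∀ᶠ j in atTop,
      SameDC α γ ((k₁ * p * h) * ThetaTri β j * (h' * q * k₂)) (p * ThetaTri β j * q) := by
  obtain ⟨N, hN⟩ := eventually_atTop.1 <| ((eventually_mem_supportedBelow p).and <|
    (eventually_mem_supportedBelow q).and <| (eventually_mem_supportedBelow h).and
      (eventually_mem_supportedBelow h')).and <| (eventually_ge_atTop α).and (eventually_ge_atTop γ)
  refine eventually_atTop.2 ⟨N, fun j hj => ?_⟩
  obtain ⟨⟨hp, hq, hhj, hh'j⟩, hα, hγ⟩ := hN (β + j) (by omega)
  set t := ThetaTri β j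
  have hs : t * h * t ∈ Ktri (β + j) := thetaTri_mul_mul_thetaTri_mem_Ktri hh hhj
  have hs' : t * h' * t ∈ Ktri (β + j) := thetaTri_mul_mul_thetaTri_mem_Ktri hh' hh'j
  refine ⟨k₁ * (t * h' * t), (t * h * t) * k₂,
    mem_Ktri_iff.1 (mul_mem hk₁ (Ktri_antitone hα hs')),
    mem_Ktri_iff.1 (mul_mem (Ktri_antitone hγ hs) hk₂), ?_⟩
  have hmove := mul_mul_mul_mul_eq_conj_mul_mul_conj (p := p) (q := q) (t := t) (h := h) (h' := h')
  rw [thetaTri_inv] at hmove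
  calc k₁ * p * h * t * (h' * q * k₂) = k₁ * (p * h * t * (h' * q)) * k₂ := by group
    _ = k₁ * ((t * h' * t) * (p * t * q) * (t * h * t)) * k₂ := by
      rw [hmove (commute_of_mem_Ktri hs' hhj).symm (commute_of_mem_Ktri hs' hp).symm
        (commute_of_mem_Ktri hs hq)]
    _ = k₁ * (t * h' * t) * (p * t * q) * ((t * h * t) * k₂) := by group

theorem tri_double_coset_product_well_defined (p q : TriG) (α β γ : ℕ) :
    (∃ N : ℕ, ∀ j ≥ N, ∃ k₁ k₂ : TriG, InKtri α k₁ ∧ InKtri γ k₂ ∧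
        p * ThetaTri β j * q = k₁ * (p * ThetaTri β N * q) * k₂) ∧
    (∀ k₁ h h' k₂ : TriG, InKtri α k₁ → InKtri β h → InKtri β h' → InKtri γ k₂ →
      ∃ N : ℕ, ∀ j ≥ N,
        SameDC α γ ((k₁ * p * h) * ThetaTri β j * (h' * q * k₂)) (p * ThetaTri β j * q)) :=
  ⟨exists_sameDC_mul_thetaTri_mul p q α β γ, fun _ _ _ _ hk₁ hh hh' hk₂ =>
    eventually_atTop.1 <| eventually_sameDC_mul_mul_thetaTri_mul_mul p q (mem_Ktri_iff.2 hk₁)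
      (mem_Ktri_iff.2 hh) (mem_Ktri_iff.2 hh') (mem_Ktri_iff.2 hk₂)⟩
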